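/- arXiv:2508.07415 — 3 statements merged into one kernel-verified Lean document; each statement's English description precedes it below -/
import Mathlib

section
/- Let ρ : Ω → ℝ≥0 be a probability density on a finite measure space Ω with ∫_Ω ρ log ρ dx ≤ C for some constant C ≥ 0. Then there exist constants c₁, c₂ > 0, depending only on C and |Ω|, such that the measure of the set A = {x : ρ(x) ≥ c₁} satisfies |A| ≥ c₂. Concretely, choosing c₁ small enough that c₁|Ω| ≤ 1/2, one has |A| ≥ min(1/2, (1/2)e^{-2C}). -/
/-!
Jensen's inequality for the convex function `x ↦ x log x` on `A = {ρ ≥ c₁}` gives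
`t log (t / |A|) ≤ ∫_A ρ log ρ` with `t = ∫_A ρ`, i.e. `|A| ≥ t exp (-(∫_A ρ log ρ) / t)`.
For small `c₁` the set `A` carries mass `t ≥ 3/4`, and since `ρ log ρ ≥ -2 √ρ`, the region
`{ρ < c₁}` lowers the entropy by at most `2 √c₁ |Ω| ≤ 1/4`, so `∫_A ρ log ρ ≤ C + 1/4`.
-/

open MeasureTheory Real Set

lemma Real.neg_two_mul_sqrt_le_mul_log {x : ℝ} (hx : 0 ≤ x) : -(2 * √x) ≤ x * log x := by
  have hsq : x = √x * √x := (mul_self_sqrt hx).symm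
  have hlog : log x = 2 * log √x := by rw [log_sqrt hx]; ring
  calc -(2 * √x) ≤ 2 * √x * (√x - 1) := by nlinarith [sqrt_nonneg x]
    _ ≤ 2 * √x * (√x * log √x) := by gcongr; exact self_sub_one_le_mul_log (sqrt_nonneg x)
    _ = x * log x := by rw [hlog]; linear_combination (-2 * log √x) * hsq

section Entropy

variable {α : Type*} [MeasurableSpace α]

theorem integral_mul_log_div_measureReal_le (ν : Measure α) [IsFiniteMeasure ν] {f : α → ℝ}
    (hf : ∀ᵐ x ∂ν, 0 ≤ f x) (hfi : Integrable f ν)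
    (hfl : Integrable (fun x ↦ f x * log (f x)) ν) :
    (∫ x, f x ∂ν) * log ((∫ x, f x ∂ν) / ν.real univ) ≤ ∫ x, f x * log (f x) ∂ν := by
  rcases eq_zero_or_neZero ν with rfl | _
  · simp
  have hm : 0 < ν.real univ := measureReal_univ_pos
  have jensen := convexOn_mul_log.map_average_le continuous_mul_log.continuousOn isClosed_Ici
    hf hfi hfl
  simp only [average_eq, smul_eq_mul] at jensen
  rw [div_eq_inv_mul]
  nlinarith [mul_le_mul_of_nonneg_left jensen hm.le, mul_inv_cancel₀ hm.ne']

theorem integral_mul_exp_neg_le_measureReal_univ (ν : Measure α) [IsFiniteMeasure ν]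
    {f : α → ℝ} (hf : ∀ᵐ x ∂ν, 0 ≤ f x) (hfi : Integrable f ν)
    (hfl : Integrable (fun x ↦ f x * log (f x)) ν) (hpos : 0 < ∫ x, f x ∂ν) :
    (∫ x, f x ∂ν) * exp (-((∫ x, f x * log (f x) ∂ν) / ∫ x, f x ∂ν)) ≤ ν.real univ := by
  set t := ∫ x, f x ∂ν
  have hm : 0 < ν.real univ := by
    rcases eq_zero_or_neZero ν with rfl | _
    · simp [t] at hpos
    · exact measureReal_univ_pos
  have hlog : log (t / ν.real univ) ≤ (∫ x, f x * log (f x) ∂ν) / t := by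
    rw [le_div_iff₀ hpos, mul_comm]
    exact integral_mul_log_div_measureReal_le ν hf hfi hfl
  have hexp : t / ν.real univ ≤ exp ((∫ x, f x * log (f x) ∂ν) / t) := by
    rwa [← log_le_iff_le_exp (by positivity)]
  rw [exp_neg, ← div_eq_mul_inv, div_le_iff₀ (exp_pos _), mul_comm]
  rwa [div_le_iff₀ hm] at hexp

theorem setIntegral_le_of_le_const_real {μ : Measure α} {f : α → ℝ} {s : Set α} {c : ℝ}
    (hs : MeasurableSet s) (hμs : μ s ≠ ⊤) (hf : ∀ x ∈ s, f x ≤ c) (hfi : IntegrableOn f s μ) :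
    ∫ x in s, f x ∂μ ≤ c * μ.real s := by
  rw [mul_comm, ← smul_eq_mul, ← setIntegral_const]
  exact setIntegral_mono_on hfi (integrableOn_const hμs) hs hf

theorem neg_two_mul_mul_measureReal_le_setIntegral_mul_log {μ : Measure α} {f : α → ℝ}
    {s : Set α} {ε : ℝ} (hε : 0 ≤ ε) (hs : MeasurableSet s) (hμs : μ s ≠ ⊤)
    (hf₀ : ∀ x ∈ s, 0 ≤ f x) (hfε : ∀ x ∈ s, f x ≤ ε ^ 2)
    (hfl : IntegrableOn (fun x ↦ f x * log (f x)) s μ) :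
    -(2 * ε) * μ.real s ≤ ∫ x in s, f x * log (f x) ∂μ := by
  refine setIntegral_ge_of_const_le_real hs hμs (fun x hx ↦ ?_) hfl
  have hsqrt : √(f x) ≤ ε := (sqrt_le_left hε).2 (hfε x hx)
  linarith [neg_two_mul_sqrt_le_mul_log (hf₀ x hx)]

end Entropy

lemma half_mul_exp_neg_two_mul_le_mul_exp_neg_div {C t E : ℝ} (hC : 0 ≤ C) (ht : 3 / 4 ≤ t)
    (hE : E ≤ C + 1 / 4) : 1 / 2 * exp (-(2 * C)) ≤ t * exp (-(E / t)) := by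
  have hEt : E / t ≤ 2 * C + 1 / 3 := by
    rw [div_le_iff₀ (by linarith)]
    nlinarith
  have hexp : 2 / 3 * exp (-(2 * C)) ≤ exp (-(E / t)) :=
    calc 2 / 3 * exp (-(2 * C)) ≤ exp (-(1 / 3)) * exp (-(2 * C)) := by
          gcongr; linarith [add_one_le_exp (-(1 / 3))]
      _ = exp (-(2 * C) + -(1 / 3)) := by rw [exp_add, mul_comm]
      _ ≤ exp (-(E / t)) := by gcongr; linarith
  nlinarith [exp_pos (-(2 * C))]

lemma exists_pos_mul_le_and_sq_mul_le {V : ℝ} (hV : 0 ≤ V) :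
    ∃ ε > 0, ε * V ≤ 1 / 8 ∧ ε ^ 2 * V ≤ 1 / 8 := by
  refine ⟨1 / (8 * (V + 1)), by positivity, ?_, ?_⟩
  · rw [div_mul_eq_mul_div, div_le_div_iff₀ (by positivity) (by norm_num)]
    linarith
  · rw [div_pow, div_mul_eq_mul_div, div_le_div_iff₀ (by positivity) (by norm_num)]
    nlinarith

/-- if a probability density `ρ` on a finite measure space has
`∫ ρ log ρ ≤ C`, then there are `c₁, c₂ > 0` with `|{ρ ≥ c₁}| ≥ c₂`; concretely,
one can take `c₁` with `c₁ |Ω| ≤ 1/2` and `c₂ = min (1/2) ((1/2) e^{-2C})`. -/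
theorem no_density_concentration
    {Ω : Type*} [MeasurableSpace Ω] (μ : Measure Ω) [IsFiniteMeasure μ]
    (ρ : Ω → ℝ) (hρ_meas : Measurable ρ) (hρ_nonneg : ∀ x, 0 ≤ ρ x)
    (hρ_int : Integrable ρ μ) (hρ_mass : ∫ x, ρ x ∂μ = 1)
    (C : ℝ) (hC : 0 ≤ C)
    (hent_int : Integrable (fun x => ρ x * Real.log (ρ x)) μ)
    (hent : ∫ x, ρ x * Real.log (ρ x) ∂μ ≤ C) :
    ∃ c₁ > 0, ∃ c₂ > 0,
      c₁ * (μ Set.univ).toReal ≤ 1 / 2 ∧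
      c₂ = min (1 / 2) ((1 / 2) * Real.exp (-(2 * C))) ∧
      c₂ ≤ (μ {x | c₁ ≤ ρ x}).toReal := by
  obtain ⟨ε, hε, hεV, hε_sq_V⟩ :=
    exists_pos_mul_le_and_sq_mul_le (measureReal_nonneg (μ := μ) (s := univ))
  set A := {x | ε ^ 2 ≤ ρ x}
  have hA : MeasurableSet A := measurableSet_le measurable_const hρ_meas
  have hAc_le : μ.real Aᶜ ≤ μ.real univ := measureReal_mono (subset_univ _)
  have hAc : ∀ x ∈ Aᶜ, ρ x ≤ ε ^ 2 := fun _ hx ↦ le_of_not_ge hx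
  have hmass : 3 / 4 ≤ ∫ x in A, ρ x ∂μ := by
    have hout := setIntegral_le_of_le_const_real hA.compl (measure_ne_top μ _) hAc
      hρ_int.integrableOn
    have := integral_add_compl hA hρ_int
    nlinarith [measureReal_nonneg (μ := μ) (s := Aᶜ)]
  have hent_A : ∫ x in A, ρ x * log (ρ x) ∂μ ≤ C + 1 / 4 := by
    have hout := neg_two_mul_mul_measureReal_le_setIntegral_mul_log hε.le hA.compl
      (measure_ne_top μ _) (fun x _ ↦ hρ_nonneg x) hAc hent_int.integrableOn
    have := integral_add_compl hA hent_int
    nlinarith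
  refine ⟨ε ^ 2, by positivity, _, by positivity, ?_, rfl, ?_⟩
  · exact hε_sq_V.trans (by norm_num)
  calc min (1 / 2) (1 / 2 * exp (-(2 * C))) ≤ 1 / 2 * exp (-(2 * C)) := min_le_right _ _
    _ ≤ (∫ x in A, ρ x ∂μ) * exp (-((∫ x in A, ρ x * log (ρ x) ∂μ) / ∫ x in A, ρ x ∂μ)) :=
      half_mul_exp_neg_two_mul_le_mul_exp_neg_div hC hmass hent_A
    _ ≤ μ.real A := by
      simpa using integral_mul_exp_neg_le_measureReal_univ (μ.restrict A)
        (ae_of_all _ hρ_nonneg) hρ_int.restrict hent_int.restrict (by linarith)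
end

section
/- Suppose bar_u, bar_v : ℝ → ℝⁿ are differentiable and satisfy d/dt bar_v = -β J(t), d/dt bar_u = (γ/|Ω|) J(t) for some continuous J and constants β, γ, |Ω| > 0. Then X₂ = (1/2)|bar_v|² + (β|Ω|/(2γ))|bar_u|² - (β|Ω|/(2(γ + β|Ω|)))|bar_u - bar_v|² is conserved: d/dt X₂ = 0. -/
theorem X2_conserved_general
    (n : ℕ) (β γ volΩ : ℝ) (hβ : 0 < β) (hγ : 0 < γ) (hvol : 0 < volΩ)
    (bar_u bar_v J : ℝ → EuclideanSpace ℝ (Fin n))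
    (hv : ∀ t, HasDerivAt bar_v (-(β • J t)) t)
    (hu : ∀ t, HasDerivAt bar_u ((γ / volΩ) • J t) t) :
    ∀ t, HasDerivAt (fun t =>
        (1 / 2) * ‖bar_v t‖ ^ 2
          + (β * volΩ / (2 * γ)) * ‖bar_u t‖ ^ 2
          - (β * volΩ / (2 * (γ + β * volΩ))) * ‖bar_u t - bar_v t‖ ^ 2)
      0 t := by
  intro t
  have hden : γ + β * volΩ ≠ 0 := by positivity
  have hX := (((hv t).norm_sq.const_mul (1 / 2)).add
      ((hu t).norm_sq.const_mul (β * volΩ / (2 * γ)))).sub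
    (((hu t).sub (hv t)).norm_sq.const_mul (β * volΩ / (2 * (γ + β * volΩ))))
  refine hX.congr_deriv ?_
  -- `(u - v)' = (γ / |Ω| + β) J`, and the coefficient of `|u - v|²` is chosen to cancel that factor.
  simp only [inner_neg_right, inner_smul_right, Pi.sub_apply, inner_sub_left, sub_neg_eq_add, ← add_smul]
  field_simp
  ring

/-- conservation of
`X₂ = (1/2)|bar_v|² + (β|Ω|/(2γ))|bar_u|² - (β|Ω|/(2(γ+β|Ω|)))|bar_u - bar_v|²`
under the drag exchange ODEs `bar_v' = -β J`, `bar_u' = (γ/|Ω|) J`. -/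
theorem X2_conserved
    (n : ℕ) (β γ volΩ : ℝ) (hβ : 0 < β) (hγ : 0 < γ) (hvol : 0 < volΩ)
    (bar_u bar_v J : ℝ → EuclideanSpace ℝ (Fin n))
    (hJ : Continuous J)
    (hv : ∀ t, HasDerivAt bar_v (-(β • J t)) t)
    (hu : ∀ t, HasDerivAt bar_u ((γ / volΩ) • J t) t) :
    ∀ t, HasDerivAt (fun t =>
        (1 / 2) * ‖bar_v t‖ ^ 2
          + (β * volΩ / (2 * γ)) * ‖bar_u t‖ ^ 2
          - (β * volΩ / (2 * (γ + β * volΩ))) * ‖bar_u t - bar_v t‖ ^ 2)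
      0 t :=
  X2_conserved_general n β γ volΩ hβ hγ hvol bar_u bar_v J hv hu
end

section
/- Let f be a smooth rapidly decaying probability density on Ω × ℝⁿ, s : Ω → ℝ≥0 a weight, ρ(x) = ∫ f dv the macroscopic density and v̄ the macroscopic velocity of f, and let bar_v = ∫∫ v f dv dx be the (constant) total momentum; for a velocity field g set I_{vv}^{g,s} = ∫∫ s(x)|σ∇_v f + (v-g)f|²/f dv dx. Then, using that ∫ (σ∇_v f + (v - v̄(x))f) dv = 0 for each x, one has I_{vv}^{bar_v,s} = I_{vv}^{v̄,s} + ∫_Ω s |v̄ - bar_v|² ρ dx. -/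
open MeasureTheory Real

local notation "⟪" x ", " y "⟫" => @inner ℝ _ _ x y

private lemma ptwise_decomp {F : Type*} [NormedAddCommGroup F] [InnerProductSpace ℝ F]
    (a c : F) (r : ℝ) (hr : 0 < r) (t : ℝ) :
    t * (‖a + r • c‖ ^ 2 / r) =
      t * (‖a‖ ^ 2 / r) + t * (2 * ⟪a, c⟫ + r * ‖c‖ ^ 2) := by
  have h := norm_add_sq_real a (r • c)
  rw [real_inner_smul_right, norm_smul, Real.norm_eq_abs, abs_of_pos hr] at h
  rw [h]
  field_simp
  ring

/-- weighted Fisher information decomposition. -/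
theorem weighted_fisher_information_decomposition
    {Ω : Type*} [MeasurableSpace Ω] (μ : Measure Ω) [IsFiniteMeasure μ]
    (n : ℕ) (σ : ℝ) (hσ : 0 < σ)
    (f : Ω × EuclideanSpace ℝ (Fin n) → ℝ)
    (df : Ω × EuclideanSpace ℝ (Fin n) → EuclideanSpace ℝ (Fin n))
    (hf_pos : ∀ p, 0 < f p)
    (hgrad : ∀ x v, HasGradientAt (fun w => f (x, w)) (df (x, v)) v)
    (hf_mass : ∫ p, f p ∂(μ.prod volume) = 1)
    (s : Ω → ℝ) (hs_nonneg : ∀ x, 0 ≤ s x)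
    (ρ : Ω → ℝ) (vbar : Ω → EuclideanSpace ℝ (Fin n))
    (bar_v : EuclideanSpace ℝ (Fin n))
    (hρ : ∀ x, ρ x = ∫ v, f (x, v))
    (hmom : ∀ x, ρ x • vbar x = ∫ v, f (x, v) • v)
    (hbar : bar_v = ∫ p, f p • p.2 ∂(μ.prod volume))
    (hdecay : ∀ x, Integrable (fun v => df (x, v)) ∧ ∫ v, df (x, v) = 0)
    (hIbar : Integrable
      (fun p => s p.1 * (‖σ • df p + f p • (p.2 - bar_v)‖ ^ 2 / f p)) (μ.prod volume))
    (hIv : Integrable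
      (fun p => s p.1 * (‖σ • df p + f p • (p.2 - vbar p.1)‖ ^ 2 / f p)) (μ.prod volume))
    (hmac : Integrable (fun x => s x * (‖vbar x - bar_v‖ ^ 2 * ρ x)) μ) :
    (∫ p, s p.1 * (‖σ • df p + f p • (p.2 - bar_v)‖ ^ 2 / f p) ∂(μ.prod volume)) =
      (∫ p, s p.1 * (‖σ • df p + f p • (p.2 - vbar p.1)‖ ^ 2 / f p) ∂(μ.prod volume))
        + ∫ x, s x * (‖vbar x - bar_v‖ ^ 2 * ρ x) ∂μ := by
  set A : Ω × EuclideanSpace ℝ (Fin n) → EuclideanSpace ℝ (Fin n) := fun p => σ • df p + f p • (p.2 - vbar p.1) with hAdef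
  set c : Ω → EuclideanSpace ℝ (Fin n) := fun x => vbar x - bar_v with hcdef
  -- basic splitting of the vector field
  have hsplitv : ∀ p : Ω × EuclideanSpace ℝ (Fin n),
      σ • df p + f p • (p.2 - bar_v) = A p + f p • c p.1 := by
    intro p
    simp only [hAdef, hcdef]
    rw [add_assoc, ← smul_add, sub_add_sub_cancel]
  -- pointwise decomposition of the integrand
  set D : Ω × EuclideanSpace ℝ (Fin n) → ℝ := fun p => s p.1 * (2 * ⟪A p, c p.1⟫ + f p * ‖c p.1‖ ^ 2) with hDdef
  have hpt : ∀ p : Ω × EuclideanSpace ℝ (Fin n),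
      s p.1 * (‖σ • df p + f p • (p.2 - bar_v)‖ ^ 2 / f p) =
        s p.1 * (‖A p‖ ^ 2 / f p) + D p := by
    intro p
    rw [hsplitv p]
    exact ptwise_decomp (A p) (c p.1) (f p) (hf_pos p) (s p.1)
  have hDint : Integrable D (μ.prod volume) := by
    refine (hIbar.sub hIv).congr (Filter.Eventually.of_forall fun p => ?_)
    simp only [Pi.sub_apply]
    rw [hpt p]; ring
  -- f is integrable on the product
  have hfint : Integrable f (μ.prod volume) := by
    by_contra h
    rw [integral_undef h] at hf_mass
    norm_num at hf_mass
  -- reduce to the value of ∫ D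
  have key : ∫ p, D p ∂(μ.prod volume) = ∫ x, s x * (‖vbar x - bar_v‖ ^ 2 * ρ x) ∂μ := by
    rw [integral_prod _ hDint]
    refine integral_congr_ae ?_
    filter_upwards [hfint.prod_right_ae, hIv.prod_right_ae] with x hfx hIx
    by_cases hsx : s x = 0
    · simp [hDdef, hsx]
    -- s x ≠ 0
    have hA2 : Integrable (fun v => ‖A (x, v)‖ ^ 2 / f (x, v)) volume := by
      refine (hIx.const_mul (s x)⁻¹).congr (Filter.Eventually.of_forall fun v => ?_)
      show (s x)⁻¹ * (s x * (‖A (x, v)‖ ^ 2 / f (x, v))) = ‖A (x, v)‖ ^ 2 / f (x, v)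
      rw [← mul_assoc, inv_mul_cancel₀ hsx, one_mul]
    -- A (x, ·) is a.e. strongly measurable
    have hfc : Continuous fun v : EuclideanSpace ℝ (Fin n) => f (x, v) := by
      refine continuous_iff_continuousAt.2 fun v => ?_
      exact (hgrad x v).hasFDerivAt.continuousAt
    have hdfm : AEStronglyMeasurable (fun v => σ • df (x, v)) volume :=
      (hdecay x).1.aestronglyMeasurable.const_smul σ
    have hsm2 : AEStronglyMeasurable
        (fun v : EuclideanSpace ℝ (Fin n) => f (x, v) • (v - vbar x)) volume :=
      (hfc.smul (continuous_id.sub continuous_const)).aestronglyMeasurable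
    have hAm : AEStronglyMeasurable (fun v => A (x, v)) volume := hdfm.add hsm2
    -- A (x, ·) is integrable via AM-GM
    have hgint : Integrable
        (fun v => (‖A (x, v)‖ ^ 2 / f (x, v) + f (x, v)) / 2) volume :=
      (hA2.add hfx).div_const 2
    have hAint : Integrable (fun v => A (x, v)) volume := by
      refine Integrable.mono' hgint hAm (Filter.Eventually.of_forall fun v => ?_)
      have hr : 0 < f (x, v) := hf_pos (x, v)
      have h1 : 2 * ‖A (x, v)‖ - f (x, v) ≤ ‖A (x, v)‖ ^ 2 / f (x, v) := by
        rw [le_div_iff₀ hr]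
        nlinarith [sq_nonneg (‖A (x, v)‖ - f (x, v))]
      linarith
    -- f • v is integrable
    have h1 : Integrable (fun v => σ • df (x, v)) volume := (hdecay x).1.smul σ
    have h2 : Integrable (fun v : EuclideanSpace ℝ (Fin n) => f (x, v) • vbar x) volume :=
      hfx.smul_const (vbar x)
    have hfv : Integrable (fun v => f (x, v) • v) volume := by
      refine ((hAint.sub h1).add h2).congr (Filter.Eventually.of_forall fun v => ?_)
      show A (x, v) - σ • df (x, v) + f (x, v) • vbar x = f (x, v) • v
      simp only [hAdef, smul_sub]
      abel
    -- ∫ A = 0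
    have hintA : ∫ v, A (x, v) = (0 : EuclideanSpace ℝ (Fin n)) := by
      have heq : (fun v => A (x, v)) =
          fun v => σ • df (x, v) + (f (x, v) • v - f (x, v) • vbar x) := by
        funext v; simp only [hAdef, smul_sub]
      have h3 : Integrable (fun v => f (x, v) • v - f (x, v) • vbar x) volume := hfv.sub h2
      rw [heq, integral_add h1 h3, integral_smul, (hdecay x).2, smul_zero, zero_add,
        integral_sub hfv h2, integral_smul_const, ← hρ x, ← hmom x, sub_self]
    -- compute the inner integral
    have hinner : Integrable (fun v => ⟪A (x, v), c x⟫) volume := hAint.inner_const (c x)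
    calc ∫ v, D (x, v)
        = ∫ v, s x * (2 * ⟪A (x, v), c x⟫ + f (x, v) * ‖c x‖ ^ 2) := rfl
      _ = s x * ∫ v, (2 * ⟪A (x, v), c x⟫ + f (x, v) * ‖c x‖ ^ 2) := integral_const_mul _ _
      _ = s x * ((2 * ∫ v, ⟪A (x, v), c x⟫) + (∫ v, f (x, v)) * ‖c x‖ ^ 2) := by
          rw [integral_add (hinner.const_mul 2) (hfx.mul_const _), integral_const_mul,
            integral_mul_const]
      _ = s x * (‖vbar x - bar_v‖ ^ 2 * ρ x) := by
          have : ∫ v, ⟪A (x, v), c x⟫ = (0 : ℝ) := by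
            have hcomm : ∫ v, ⟪A (x, v), c x⟫ = ∫ v, ⟪c x, A (x, v)⟫ :=
              integral_congr_ae (Filter.Eventually.of_forall fun v =>
                real_inner_comm (c x) (A (x, v)))
            rw [hcomm, integral_inner hAint, hintA, inner_zero_right]
          rw [this, ← hρ x]
          simp only [hcdef]
          ring
  -- conclude
  have : ∫ p, s p.1 * (‖σ • df p + f p • (p.2 - bar_v)‖ ^ 2 / f p) ∂(μ.prod volume) =
      (∫ p, s p.1 * (‖A p‖ ^ 2 / f p) ∂(μ.prod volume)) + ∫ p, D p ∂(μ.prod volume) := by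
    rw [← integral_add hIv hDint]
    exact integral_congr_ae (Filter.Eventually.of_forall hpt)
  rw [this, key]
end
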